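/- arXiv:2511.15287 — 5 statements merged into one kernel-verified Lean document; each statement's English description precedes it below -/
import Mathlib

section
/- Let H ⊆ H₀ be Hilbert spaces with continuous embedding, a : H × H → ℂ a bounded sesquilinear form, and suppose there exists R* : H₀ → H such that a(w, R* v) = ⟨w, v⟩_{H₀} for all w ∈ H and v ∈ H₀. Let V ⊆ H be a subspace with orthogonal projection Π_V, set η := ‖(I − Π_V) R*‖_{H₀ → H}. If u ∈ H and u_V ∈ V satisfy the Galerkin orthogonality a(u − u_V, v) = 0 for all v ∈ V, then ‖u − u_V‖_{H₀} ≤ ‖a‖ · η · ‖u − u_V‖_H. -/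
open scoped ComplexInnerProductSpace

/-- Aubin–Nitsche duality estimate: if `u_V` is a Galerkin approximation of `u`
(Galerkin orthogonality) then the `H₀`-norm of the error is bounded by
`‖a‖ · η · ‖u − u_V‖_H`, where `η = ‖(I − Π_V) R*‖_{H₀ → H}` is the adjoint
approximability constant. -/
theorem aubin_nitsche
    (H : Type*) [NormedAddCommGroup H] [InnerProductSpace ℂ H] [CompleteSpace H]
    (H₀ : Type*) [NormedAddCommGroup H₀] [InnerProductSpace ℂ H₀] [CompleteSpace H₀]
    (ι : H →L[ℂ] H₀) (hι : Function.Injective ι)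
    (a : H →ₗ⋆[ℂ] H →ₗ[ℂ] ℂ) (Ca : ℝ)
    (hCa : ∀ u v : H, ‖a u v‖ ≤ Ca * ‖u‖ * ‖v‖)
    (Rstar : H₀ →L[ℂ] H) (hR : ∀ (w : H) (v : H₀), a w (Rstar v) = ⟪ι w, v⟫)
    (V : Submodule ℂ H) [V.HasOrthogonalProjection]
    (u uV : H) (huV : uV ∈ V) (hGal : ∀ v ∈ V, a (u - uV) v = 0) :
    ‖ι u - ι uV‖ ≤
      Ca * ‖(ContinuousLinearMap.id ℂ H - V.subtypeL.comp V.orthogonalProjectionOnto).comp Rstar‖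
        * ‖u - uV‖ := by
  set T := (ContinuousLinearMap.id ℂ H - V.subtypeL.comp V.orthogonalProjectionOnto).comp Rstar
    with hT
  set e := u - uV with he
  have hιe : ι u - ι uV = ι e := by simp [he]
  rw [hιe]
  set v₀ := ι e with hv₀
  by_cases hz : ‖v₀‖ = 0
  · have : e = 0 := by
      have : ι e = ι 0 := by simpa [norm_eq_zero] using hz
      exact hι this
    simp [hz, this]
  · -- decomposition
    have hdecomp : Rstar v₀ = T v₀ + (V.subtypeL.comp V.orthogonalProjectionOnto) (Rstar v₀) := by
      simp [hT]
    have hmem : ((V.subtypeL.comp V.orthogonalProjectionOnto) (Rstar v₀) : H) ∈ V := by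
      simp
    have key : (‖v₀‖ : ℂ) ^ 2 = a e (T v₀) := by
      have h1 : a e (Rstar v₀) = ⟪v₀, v₀⟫ := hR e v₀
      have h2 : a e (Rstar v₀) = a e (T v₀) + a e ((V.subtypeL.comp V.orthogonalProjectionOnto) (Rstar v₀)) := by
        conv_lhs => rw [hdecomp]
        rw [map_add]
      rw [hGal _ hmem, add_zero] at h2
      rw [← h2, h1, inner_self_eq_norm_sq_to_K]; norm_cast
    have hsq : ‖v₀‖ ^ 2 ≤ (Ca * ‖T‖ * ‖e‖) * ‖v₀‖ := by
      have h3 : ‖a e (T v₀)‖ ≤ Ca * ‖e‖ * ‖T v₀‖ := hCa e (T v₀)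
      have h4 : ‖T v₀‖ ≤ ‖T‖ * ‖v₀‖ := T.le_opNorm v₀
      have h5 : ‖v₀‖ ^ 2 = ‖a e (T v₀)‖ := by
        rw [← key]
        simp [norm_pow]
      have hCane : 0 ≤ Ca * ‖e‖ := by
        have := hCa e e
        have h0 : 0 ≤ ‖a e e‖ := norm_nonneg _
        nlinarith [norm_nonneg e, (norm_pos_iff.mpr (show e ≠ 0 by
          intro h; apply hz; simp [hv₀, h])).le, norm_pos_iff.mpr (show e ≠ 0 by
          intro h; apply hz; simp [hv₀, h])]
      calc ‖v₀‖ ^ 2 = ‖a e (T v₀)‖ := h5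
        _ ≤ Ca * ‖e‖ * ‖T v₀‖ := h3
        _ ≤ Ca * ‖e‖ * (‖T‖ * ‖v₀‖) := by
            exact mul_le_mul_of_nonneg_left h4 hCane
        _ = (Ca * ‖T‖ * ‖e‖) * ‖v₀‖ := by ring
    have hpos : 0 < ‖v₀‖ := lt_of_le_of_ne (norm_nonneg _) (Ne.symm hz)
    nlinarith [hsq, hpos]
end

section
/- Let H ⊆ H₀ be Hilbert spaces, a : H × H → ℂ a bounded sesquilinear form satisfying the Gårding inequality |a(u,u)| ≥ c_G ‖u‖_H² − C_G ‖u‖_{H₀}² for all u ∈ H (with c_G, C_G > 0), and admitting an adjoint solution operator R* : H₀ → H with a(w, R* v) = ⟨w, v⟩_{H₀} for all w ∈ H. Let 0 < ε < 1 and let V ⊆ H be a finite-dimensional subspace with η := ‖(I − Π_V) R*‖_{H₀ → H} satisfying C_G ‖a‖² η² ≤ (1 − ε) c_G. Then for every u ∈ H the Galerkin approximation u_V ∈ V (defined by a(u_V, v) = a(u, v) for all v ∈ V) exists, is unique, and satisfies ‖u − u_V‖_H ≤ ε^{-1} c_G^{-1} ‖a‖ ‖(I − Π_V) u‖_H. 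-/
open scoped ComplexInnerProductSpace

set_option maxHeartbeats 1000000

/-- The Schatz duality argument: under a Gårding inequality and a smallness condition
on the adjoint approximability constant `η = ‖(I − Π_V) R*‖_{H₀ → H}`, the Galerkin
approximation exists, is unique, and is quasioptimal with constant `ε⁻¹ c_G⁻¹ ‖a‖`. -/
theorem schatz_duality
    (H : Type*) [NormedAddCommGroup H] [InnerProductSpace ℂ H] [CompleteSpace H]
    (H₀ : Type*) [NormedAddCommGroup H₀] [InnerProductSpace ℂ H₀] [CompleteSpace H₀]
    (ι : H →L[ℂ] H₀) (hι : Function.Injective ι)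
    (a : H →ₗ⋆[ℂ] H →ₗ[ℂ] ℂ) (Ca : ℝ)
    (hCa : ∀ u v : H, ‖a u v‖ ≤ Ca * ‖u‖ * ‖v‖)
    (cG CG : ℝ) (hcG : 0 < cG) (hCG : 0 < CG)
    (hGarding : ∀ u : H, cG * ‖u‖ ^ 2 - CG * ‖ι u‖ ^ 2 ≤ ‖a u u‖)
    (Rstar : H₀ →L[ℂ] H) (hR : ∀ (w : H) (v : H₀), a w (Rstar v) = ⟪ι w, v⟫)
    (ε : ℝ) (hε0 : 0 < ε) (hε1 : ε < 1)
    (V : Submodule ℂ H) [FiniteDimensional ℂ V]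
    (hη : CG * Ca ^ 2 *
        ‖(ContinuousLinearMap.id ℂ H - V.subtypeL.comp (V.orthogonalProjection)).comp Rstar‖ ^ 2
      ≤ (1 - ε) * cG)
    (u : H) :
    (∃! w : H, w ∈ V ∧ ∀ v ∈ V, a w v = a u v) ∧
      ∀ w : H, w ∈ V → (∀ v ∈ V, a w v = a u v) →
        ‖u - w‖ ≤ ε⁻¹ * cG⁻¹ * Ca * ‖u - (V.orthogonalProjection u : H)‖ := by
  classical
  set Pr : H →L[ℂ] H := V.subtypeL.comp (V.orthogonalProjection) with hPr
  set P : H₀ →L[ℂ] H := (ContinuousLinearMap.id ℂ H - Pr).comp Rstar with hPdef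
  set η : ℝ := ‖P‖ with hηdef
  have hηnn : 0 ≤ η := norm_nonneg _
  -- Key lemma: ε cG ‖e‖² ≤ ‖a e e‖ for Galerkin-orthogonal e.
  have key : ∀ e : H, (∀ v ∈ V, a e v = 0) → ε * cG * ‖e‖ ^ 2 ≤ ‖a e e‖ := by
    intro e hGe
    by_cases he : e = 0
    · simp [he]
    have hepos : (0 : ℝ) < ‖e‖ := norm_pos_iff.mpr he
    have hCa0 : 0 ≤ Ca := by
      have h1 := hCa e e
      nlinarith [norm_nonneg (a e e), mul_pos hepos hepos]
    set y : H₀ := ι e with hy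
    -- a e (P y) = ‖y‖²
    have hdec : a e (P y) = (‖y‖ : ℂ) ^ 2 := by
      have hmem : Pr (Rstar y) ∈ V := (V.orthogonalProjection (Rstar y)).2
      have h0 : a e (Pr (Rstar y)) = 0 := hGe _ hmem
      have hPy : P y = Rstar y - Pr (Rstar y) := by
        simp [hPdef, ContinuousLinearMap.sub_apply]
      rw [hPy, map_sub, h0, sub_zero, hR, hy, inner_self_eq_norm_sq_to_K]
      norm_cast
    have hPynorm : ‖P y‖ ≤ η * ‖y‖ := P.le_opNorm y
    have h1 : ‖y‖ ^ 2 ≤ Ca * ‖e‖ * (η * ‖y‖) := by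
      have h2 : ‖a e (P y)‖ = ‖y‖ ^ 2 := by
        rw [hdec]
        rw [← Complex.ofReal_pow, Complex.norm_real]
        exact abs_of_nonneg (by positivity)
      calc ‖y‖ ^ 2 = ‖a e (P y)‖ := h2.symm
        _ ≤ Ca * ‖e‖ * ‖P y‖ := hCa e _
        _ ≤ Ca * ‖e‖ * (η * ‖y‖) := by
            have : 0 ≤ Ca * ‖e‖ := by positivity
            exact mul_le_mul_of_nonneg_left hPynorm this
    have hylin : ‖y‖ ≤ Ca * η * ‖e‖ := by
      rcases eq_or_lt_of_le (norm_nonneg y) with h | h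
      · rw [← h]; positivity
      · nlinarith
    have hysq : ‖y‖ ^ 2 ≤ Ca ^ 2 * η ^ 2 * ‖e‖ ^ 2 := by nlinarith [norm_nonneg y]
    have hG := hGarding e
    rw [← hy] at hG
    have hη' : CG * Ca ^ 2 * η ^ 2 * ‖e‖ ^ 2 ≤ (1 - ε) * cG * ‖e‖ ^ 2 :=
      mul_le_mul_of_nonneg_right hη (by positivity)
    have hCGy : CG * ‖y‖ ^ 2 ≤ CG * Ca ^ 2 * η ^ 2 * ‖e‖ ^ 2 := by
      have := mul_le_mul_of_nonneg_left hysq hCG.le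
      linarith [this, (by ring : CG * (Ca ^ 2 * η ^ 2 * ‖e‖ ^ 2) = CG * Ca ^ 2 * η ^ 2 * ‖e‖ ^ 2)]
    linarith
  -- Quasioptimality
  have quasi : ∀ w : H, w ∈ V → (∀ v ∈ V, a w v = a u v) →
      ‖u - w‖ ≤ ε⁻¹ * cG⁻¹ * Ca * ‖u - (V.orthogonalProjection u : H)‖ := by
    intro w hw hgal
    set e : H := u - w with he
    have hGe : ∀ v ∈ V, a e v = 0 := by
      intro v hv
      have : a e = a u - a w := by rw [he, map_sub]
      rw [this, LinearMap.sub_apply, hgal v hv, sub_self]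
    by_cases he0 : e = 0
    · have huV : u ∈ V := by
        have : u = w := by
          have := sub_eq_zero.mp he0; exact this
        rw [this]; exact hw
      have : (V.orthogonalProjection u : H) = u := by
        exact V.starProjection_eq_self_iff.mpr huV
      rw [he0, this, sub_self]
      simp
    have hepos : (0 : ℝ) < ‖e‖ := norm_pos_iff.mpr he0
    have hkey := key e hGe
    have hae : a e e = a e (u - (V.orthogonalProjection u : H)) := by
      have hmem : (V.orthogonalProjection u : H) - w ∈ V :=
        V.sub_mem (V.orthogonalProjection u).2 hw
      have h0 : a e ((V.orthogonalProjection u : H) - w) = 0 := hGe _ hmem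
      have hsplit : e = (u - (V.orthogonalProjection u : H)) +
          ((V.orthogonalProjection u : H) - w) := by rw [he]; abel
      nth_rewrite 2 [hsplit]
      rw [map_add, h0, add_zero]
    have hbound : ε * cG * ‖e‖ ^ 2 ≤ Ca * ‖e‖ * ‖u - (V.orthogonalProjection u : H)‖ := by
      calc ε * cG * ‖e‖ ^ 2 ≤ ‖a e e‖ := hkey
        _ = ‖a e (u - (V.orthogonalProjection u : H))‖ := by rw [hae]
        _ ≤ Ca * ‖e‖ * ‖u - (V.orthogonalProjection u : H)‖ := hCa e _
    have hεcG : (0 : ℝ) < ε * cG := by positivity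
    have h2 : ε * cG * ‖e‖ ≤ Ca * ‖u - (V.orthogonalProjection u : H)‖ := by
      nlinarith
    calc ‖e‖ = (ε * cG)⁻¹ * (ε * cG * ‖e‖) := by field_simp
      _ ≤ (ε * cG)⁻¹ * (Ca * ‖u - (V.orthogonalProjection u : H)‖) := by
          exact mul_le_mul_of_nonneg_left h2 (by positivity)
      _ = ε⁻¹ * cG⁻¹ * Ca * ‖u - (V.orthogonalProjection u : H)‖ := by
          rw [mul_inv]; ring
  refine ⟨?_, quasi⟩
  -- Existence and uniqueness via a linear endomorphism of V
  have hSex : ∀ w : V, ∃ z : V, ∀ v : V, ⟪z, v⟫ = a (w : H) (v : H) := by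
    intro w
    refine ⟨(InnerProductSpace.toDual ℂ V).symm
      (LinearMap.toContinuousLinearMap ((a (w : H)).comp V.subtype)), fun v => ?_⟩
    rw [InnerProductSpace.toDual_symm_apply]
    rfl
  choose S hS using hSex
  have hSadd : ∀ w w' : V, S (w + w') = S w + S w' := by
    intro w w'
    refine ext_inner_right ℂ fun v => ?_
    rw [hS, inner_add_left, hS, hS]
    push_cast [map_add]
    rfl
  have hSsmul : ∀ (c : ℂ) (w : V), S (c • w) = c • S w := by
    intro c w
    refine ext_inner_right ℂ fun v => ?_
    rw [hS, inner_smul_left, hS]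
    have : ((c • w : V) : H) = c • (w : H) := rfl
    rw [this, map_smulₛₗ]
    rfl
  set SL : V →ₗ[ℂ] V := { toFun := S, map_add' := hSadd, map_smul' := hSsmul } with hSL
  have hSinj : Function.Injective SL := by
    rw [← LinearMap.ker_eq_bot, LinearMap.ker_eq_bot']
    intro w hw
    have hzero : ∀ v ∈ V, a (w : H) v = 0 := by
      intro v hv
      have := hS w ⟨v, hv⟩
      rw [show SL w = S w from rfl] at hw
      rw [← this, hw, inner_zero_left]
    have hk := key (w : H) hzero
    have : a (w : H) (w : H) = 0 := hzero _ w.2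
    rw [this] at hk
    simp only [norm_zero] at hk
    have hn : ‖(w : H)‖ = 0 := by
      by_contra hne
      have hpos : 0 < ‖(w : H)‖ := lt_of_le_of_ne (norm_nonneg _) (Ne.symm hne)
      have : 0 < ε * cG * ‖(w : H)‖ ^ 2 := by positivity
      linarith
    have : (w : H) = 0 := norm_eq_zero.mp hn
    exact Subtype.ext this
  have hSsurj : Function.Surjective SL :=
    (LinearMap.injective_iff_surjective).mp hSinj
  -- Riesz representative of v ↦ a u v on V
  obtain ⟨z₀, hz₀⟩ : ∃ z : V, ∀ v : V, ⟪z, v⟫ = a u (v : H) := by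
    refine ⟨(InnerProductSpace.toDual ℂ V).symm
      (LinearMap.toContinuousLinearMap ((a u).comp V.subtype)), fun v => ?_⟩
    rw [InnerProductSpace.toDual_symm_apply]
    rfl
  obtain ⟨w₀, hw₀⟩ := hSsurj z₀
  refine ⟨(w₀ : H), ⟨w₀.2, fun v hv => ?_⟩, ?_⟩
  · have h1 := hS w₀ ⟨v, hv⟩
    have h2 := hz₀ ⟨v, hv⟩
    rw [show SL w₀ = S w₀ from rfl] at hw₀
    rw [← h1, hw₀, h2]
  · rintro w ⟨hwV, hwgal⟩
    have hdiff : ∀ v ∈ V, a (w - (w₀ : H)) v = 0 := by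
      intro v hv
      have hw₀gal : a (w₀ : H) v = a u v := by
        have h1 := hS w₀ ⟨v, hv⟩
        have h2 := hz₀ ⟨v, hv⟩
        rw [show SL w₀ = S w₀ from rfl] at hw₀
        rw [← h1, hw₀, h2]
      rw [map_sub, LinearMap.sub_apply, hwgal v hv, hw₀gal, sub_self]
    have hk := key _ hdiff
    have hmem : w - (w₀ : H) ∈ V := V.sub_mem hwV w₀.2
    have h0 : a (w - (w₀ : H)) (w - (w₀ : H)) = 0 := hdiff _ hmem
    rw [h0] at hk
    simp only [norm_zero] at hk
    have hn : ‖w - (w₀ : H)‖ = 0 := by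
      by_contra hne
      have hpos : 0 < ‖w - (w₀ : H)‖ := lt_of_le_of_ne (norm_nonneg _) (Ne.symm hne)
      have : 0 < ε * cG * ‖w - (w₀ : H)‖ ^ 2 := by positivity
      linarith
    have := norm_eq_zero.mp hn
    exact sub_eq_zero.mp this
end

section
/- Let H be a Hilbert space, Z ⊆ H a subspace with its own norm, a_S : H × H → ℂ a bounded, coercive sesquilinear form with coercivity constant 𝔠(a_S) > 0, and R_S : H* → H the Lax–Milgram solution operator satisfying a_S(R_S g, w) = ⟨g, w⟩ for all w ∈ H. Let V ⊆ H be a closed subspace with orthogonal projection Π_V, and let Π_S : H → V be the adjoint-Galerkin projection defined by a_S(v, Π_S g) = a_S(v, g) for all v ∈ V. Then for all w ∈ H, ‖(I − Π_S) w‖_{Z*} ≤ 𝔠(a_S)^{-1} ‖a_S‖² ‖(I − Π_V) R_S‖_{Z → H} ‖(I − Π_V) w‖_H, where ‖·‖_{Z*} is the norm dual to Z with respect to the H-pairing. -/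
open scoped ComplexInnerProductSpace

/-- Aubin–Nitsche duality estimate for the elliptic projection `Π_S` associated with a
bounded coercive sesquilinear form `a_S`: for all `w ∈ H`,
`‖(I − Π_S) w‖_{Z*} ≤ 𝔠(a_S)⁻¹ ‖a_S‖² ‖(I − Π_V) R_S‖_{Z → H} ‖(I − Π_V) w‖_H`,
stated by testing against an arbitrary `z` in the subspace `Z` (with its own norm,
embedded into `H` by `ιZ`), with the `Z → H` operator norm replaced by an arbitrary
upper bound `M`. -/
theorem elliptic_projection_dual_estimate
    (H : Type*) [NormedAddCommGroup H] [InnerProductSpace ℂ H] [CompleteSpace H]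
    (Z : Type*) [NormedAddCommGroup Z] [NormedSpace ℂ Z]
    (ιZ : Z →ₗ[ℂ] H) (hιZ : Function.Injective ιZ)
    (aS : H →ₗ⋆[ℂ] H →ₗ[ℂ] ℂ) (CaS c : ℝ)
    (hbdd : ∀ u v : H, ‖aS u v‖ ≤ CaS * ‖u‖ * ‖v‖)
    (hc : 0 < c) (hcoer : ∀ u : H, c * ‖u‖ ^ 2 ≤ ‖aS u u‖)
    (RS : H →ₗ[ℂ] H) (hRS : ∀ g w : H, aS (RS g) w = ⟪g, w⟫)
    (V : Submodule ℂ H) [V.HasOrthogonalProjection]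
    (PiS : H →ₗ[ℂ] H) (hPiSmem : ∀ g : H, PiS g ∈ V)
    (hPiS : ∀ g : H, ∀ v ∈ V, aS v (PiS g) = aS v g)
    (M : ℝ)
    (hM : ∀ z : Z,
      ‖RS (ιZ z) - (V.subtypeL.comp V.orthogonalProjectionOnto) (RS (ιZ z))‖ ≤ M * ‖z‖) :
    ∀ w : H, ∀ z : Z,
      ‖⟪ιZ z, w - PiS w⟫‖ ≤
        c⁻¹ * CaS ^ 2 * M * ‖w - (V.subtypeL.comp V.orthogonalProjectionOnto) w‖ * ‖z‖ := by
  intro w z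
  set e : H := w - PiS w with he
  set Pw : H := (V.subtypeL.comp V.orthogonalProjectionOnto) w with hPw
  set g : H := RS (ιZ z) with hg
  set Pg : H := (V.subtypeL.comp V.orthogonalProjectionOnto) g with hPg
  have hPgV : Pg ∈ V := (V.orthogonalProjectionOnto g).2
  have hPwV : Pw ∈ V := (V.orthogonalProjectionOnto w).2
  -- Galerkin orthogonality
  have hgal : ∀ v ∈ V, aS v e = 0 := by
    intro v hv
    have : aS v e = aS v w - aS v (PiS w) := by rw [he, map_sub]
    rw [this, hPiS w v hv, sub_self]
  -- key identity: ⟪ιZ z, e⟫ = aS (g - Pg) e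
  have hkey : ⟪ιZ z, e⟫ = aS (g - Pg) e := by
    have h1 : aS (g - Pg) e = aS g e - aS Pg e := by
      have h0 : aS (g - Pg) = aS g - aS Pg := map_sub aS g Pg
      rw [h0, LinearMap.sub_apply]
    rw [h1, hRS, hgal Pg hPgV, sub_zero]
  have hMz : 0 ≤ M * ‖z‖ := le_trans (norm_nonneg _) (hM z)
  have hgPg : ‖g - Pg‖ ≤ M * ‖z‖ := hM z
  by_cases hez : e = 0
  · rw [hez]
    simp only [inner_zero_right, norm_zero]
    have : (0:ℝ) ≤ c⁻¹ * CaS ^ 2 * ‖w - Pw‖ * (M * ‖z‖) := by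
      apply mul_nonneg
      apply mul_nonneg
      apply mul_nonneg (inv_nonneg.mpr hc.le) (sq_nonneg _)
      exact norm_nonneg _
      exact hMz
    linarith [this]
  · have hen : 0 < ‖e‖ := norm_pos_iff.mpr hez
    -- CaS is positive
    have hCaS : 0 < CaS := by
      have h1 := hcoer e
      have h2 := hbdd e e
      nlinarith [sq_nonneg ‖e‖, mul_pos hc (mul_pos hen hen)]
    -- Céa-type estimate
    have hCea : ‖e‖ ≤ c⁻¹ * CaS * ‖w - Pw‖ := by
      have hid : aS e e = aS (w - Pw) e := by
        have hmem : Pw - PiS w ∈ V := V.sub_mem hPwV (hPiSmem w)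
        have : aS (w - Pw) e = aS e e - aS (Pw - PiS w) e := by
          rw [← LinearMap.sub_apply, ← map_sub]
          congr 2
          rw [he]; abel
        rw [this, hgal _ hmem, sub_zero]
      have h1 : c * ‖e‖ ^ 2 ≤ ‖aS (w - Pw) e‖ := by rw [← hid]; exact hcoer e
      have h2 : ‖aS (w - Pw) e‖ ≤ CaS * ‖w - Pw‖ * ‖e‖ := hbdd _ _
      have h3 : c * ‖e‖ ≤ CaS * ‖w - Pw‖ := by
        have := le_trans h1 h2
        nlinarith
      rw [← sub_nonneg] at h3 ⊢
      have : c⁻¹ * CaS * ‖w - Pw‖ - ‖e‖ = c⁻¹ * (CaS * ‖w - Pw‖ - c * ‖e‖) := by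
        field_simp
      rw [this]
      exact mul_nonneg (inv_nonneg.mpr hc.le) (by linarith)
    calc ‖⟪ιZ z, e⟫‖ = ‖aS (g - Pg) e‖ := by rw [hkey]
      _ ≤ CaS * ‖g - Pg‖ * ‖e‖ := hbdd _ _
      _ ≤ CaS * (M * ‖z‖) * (c⁻¹ * CaS * ‖w - Pw‖) := by
          apply mul_le_mul
          · exact mul_le_mul_of_nonneg_left hgPg hCaS.le
          · exact hCea
          · exact norm_nonneg _
          · exact mul_nonneg hCaS.le hMz
      _ = c⁻¹ * CaS ^ 2 * M * ‖w - Pw‖ * ‖z‖ := by ring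
end

section
/- Let X be a Banach space, L : X → X bounded, and P : X → X a bounded projection. Suppose I + L is invertible and I + (P − I) L (I + L)^{-1} is invertible. Then I + P L is invertible and (I + P L)^{-1} (I − P) = (I + L)^{-1} (I − P) [ I + (P − I) L (I + L)^{-1} ]^{-1} (I − P). In particular, [ I + (P − I) L (I + L)^{-1} ]^{-1} (I − P) = (I − P) [ I + (P − I) L (I + L)^{-1} ]^{-1} (I − P). -/
/-- Factorization of the inverse of `I + P L`: if `I + L` is invertible (with inverse `S`)
and `I + (P − I) L (I + L)⁻¹` is invertible (with inverse `T`), then `I + P L` is invertible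
and `(I + P L)⁻¹ (I − P) = (I + L)⁻¹ (I − P) [I + (P − I) L (I + L)⁻¹]⁻¹ (I − P)`; in
particular `[I + (P − I) L (I + L)⁻¹]⁻¹ (I − P) = (I − P) [I + (P − I) L (I + L)⁻¹]⁻¹ (I − P)`. -/
theorem projected_inverse_factorization
    (X : Type*) [NormedAddCommGroup X] [NormedSpace ℂ X] [CompleteSpace X]
    (L P S T : X →L[ℂ] X) (hP : P * P = P)
    (hS1 : S * (1 + L) = 1) (hS2 : (1 + L) * S = 1)
    (hT1 : T * (1 + (P - 1) * L * S) = 1) (hT2 : (1 + (P - 1) * L * S) * T = 1) :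
    (∃ Q : X →L[ℂ] X, Q * (1 + P * L) = 1 ∧ (1 + P * L) * Q = 1 ∧
        Q * (1 - P) = S * (1 - P) * T * (1 - P)) ∧
      T * (1 - P) = (1 - P) * T * (1 - P) := by
  set A : X →L[ℂ] X := 1 + (P - 1) * L * S with hA
  -- P * A = P
  have hPA : P * A = P := by
    have h0 : P * (P - 1) = 0 := by
      rw [mul_sub, hP, mul_one, sub_self]
    rw [hA, mul_add, mul_one, ← mul_assoc, ← mul_assoc, h0]
    simp
  have hPT : P * T = P := by
    calc P * T = (P * A) * T := by rw [hPA]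
    _ = P * (A * T) := by rw [mul_assoc]
    _ = P := by rw [hT2, mul_one]
  have hTP : T * (1 - P) = (1 - P) * T * (1 - P) := by
    have : (1 - P) * T = T - P := by
      rw [sub_mul, one_mul, hPT]
    rw [this, sub_mul]
    simp [mul_sub, hP]
  -- factorization
  have hfac : A * (1 + L) = 1 + P * L := by
    have h1 : (P - 1) * L * S * (1 + L) = (P - 1) * L := by
      rw [mul_assoc, hS1, mul_one]
    rw [hA, add_mul, one_mul, h1, sub_mul, one_mul]
    abel
  refine ⟨⟨S * T, ?_, ?_, ?_⟩, hTP⟩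
  · calc S * T * (1 + P * L) = S * T * (A * (1 + L)) := by rw [hfac]
      _ = S * ((T * A) * (1 + L)) := by noncomm_ring
      _ = 1 := by rw [hT1, one_mul, hS1]
  · calc (1 + P * L) * (S * T) = (A * (1 + L)) * (S * T) := by rw [hfac]
      _ = A * (((1 + L) * S) * T) := by noncomm_ring
      _ = 1 := by rw [hS2, one_mul, hT2]
  · calc S * T * (1 - P) = S * (T * (1 - P)) := by rw [mul_assoc]
      _ = S * ((1 - P) * T * (1 - P)) := by rw [hTP]
      _ = S * (1 - P) * T * (1 - P) := by noncomm_ring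
end

section
/- There exists a constant C > 0 such that for all real k ≥ 1 and all integers p ≥ 0: ∑_{ℓ=0}^{p+1} k^ℓ / ℓ! ≤ C^{p+1} · max(k/(p+1), 1)^{p+1}. -/
/-- Uniform bound on the truncated exponential series: there is `C > 0` such that for all
`k ≥ 1` and `p ∈ ℕ`, `∑_{ℓ=0}^{p+1} k^ℓ/ℓ! ≤ C^{p+1} · max(k/(p+1), 1)^{p+1}`. -/
theorem truncated_exponential_bound :
    ∃ C : ℝ, 0 < C ∧ ∀ k : ℝ, 1 ≤ k → ∀ p : ℕ,
      ∑ ℓ ∈ Finset.range (p + 2), k ^ ℓ / (ℓ.factorial : ℝ)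
        ≤ C ^ (p + 1) * (max (k / ((p : ℝ) + 1)) 1) ^ (p + 1) := by
  refine ⟨2 * Real.exp 1, by positivity, fun k hk p => ?_⟩
  have hk0 : (0:ℝ) < k := by linarith
  have hN : (0:ℝ) < (p:ℝ) + 1 := by positivity
  have hM1 : (1:ℝ) ≤ max (k / ((p : ℝ) + 1)) 1 := le_max_right _ _
  have hMp : (1:ℝ) ≤ (max (k / ((p : ℝ) + 1)) 1) ^ (p + 1) := by
    calc (1:ℝ) = 1 ^ (p+1) := (one_pow _).symm
      _ ≤ _ := pow_le_pow_left₀ zero_le_one hM1 _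
  have he1 : (1:ℝ) ≤ Real.exp 1 := by
    have := Real.add_one_le_exp (1:ℝ); linarith
  have hexp_pow : Real.exp ((p:ℝ) + 1) = Real.exp 1 ^ (p + 1) := by
    rw [← Real.exp_nat_mul]; norm_num
  by_cases hkp : k ≤ (p:ℝ) + 1
  · -- small k case
    calc ∑ ℓ ∈ Finset.range (p + 2), k ^ ℓ / (ℓ.factorial : ℝ)
        ≤ Real.exp k := Real.sum_le_exp_of_nonneg hk0.le _
      _ ≤ Real.exp ((p:ℝ) + 1) := Real.exp_le_exp.2 hkp
      _ = Real.exp 1 ^ (p + 1) := hexp_pow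
      _ ≤ (2 * Real.exp 1) ^ (p + 1) * (max (k / ((p : ℝ) + 1)) 1) ^ (p + 1) := by
          have h1 : Real.exp 1 ^ (p+1) ≤ (2 * Real.exp 1) ^ (p+1) :=
            pow_le_pow_left₀ (by positivity) (by nlinarith) _
          nlinarith [pow_pos (show (0:ℝ) < 2 * Real.exp 1 by positivity) (p+1)]
  · push_neg at hkp
    have hMk : max (k / ((p : ℝ) + 1)) 1 = k / ((p:ℝ) + 1) :=
      max_eq_left (by rw [le_div_iff₀ hN]; linarith)
    -- each term is at most k^(p+1)/(p+1)!
    have hterm : ∀ ℓ ∈ Finset.range (p + 2),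
        k ^ ℓ / (ℓ.factorial : ℝ) ≤ k ^ (p+1) / ((p+1).factorial : ℝ) := by
      intro ℓ hℓ
      have hℓ' : ℓ ≤ p + 1 := by simpa [Nat.lt_succ_iff] using Finset.mem_range.1 hℓ
      have hdf : (ℓ.factorial : ℕ) * (p+1).descFactorial (p+1-ℓ) = (p+1).factorial := by
        have := Nat.factorial_mul_descFactorial (n := p+1) (k := p+1-ℓ) (by omega)
        simpa [show p + 1 - (p + 1 - ℓ) = ℓ by omega] using this
      have hdle : ((p+1).descFactorial (p+1-ℓ) : ℝ) ≤ k ^ (p+1-ℓ) := by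
        calc ((p+1).descFactorial (p+1-ℓ) : ℝ) ≤ ((p+1:ℕ) : ℝ) ^ (p+1-ℓ) := by
              exact_mod_cast Nat.descFactorial_le_pow _ _
          _ ≤ k ^ (p+1-ℓ) := pow_le_pow_left₀ (by positivity) (by push_cast; linarith) _
      rw [div_le_div_iff₀ (by positivity) (by positivity)]
      have hfac : ((p+1).factorial : ℝ) = (ℓ.factorial : ℝ) * ((p+1).descFactorial (p+1-ℓ) : ℝ) := by
        exact_mod_cast hdf.symm
      rw [hfac]
      calc k ^ ℓ * ((ℓ.factorial : ℝ) * ((p+1).descFactorial (p+1-ℓ) : ℝ))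
          ≤ k ^ ℓ * ((ℓ.factorial : ℝ) * k ^ (p+1-ℓ)) := by
            apply mul_le_mul_of_nonneg_left _ (by positivity)
            exact mul_le_mul_of_nonneg_left hdle (by positivity)
        _ = k ^ (p+1) * (ℓ.factorial : ℝ) := by
            rw [show k ^ ℓ * ((ℓ.factorial : ℝ) * k ^ (p+1-ℓ))
              = k ^ ℓ * k ^ (p+1-ℓ) * (ℓ.factorial : ℝ) by ring, ← pow_add,
              show ℓ + (p+1-ℓ) = p+1 by omega]
    have hsum : ∑ ℓ ∈ Finset.range (p + 2), k ^ ℓ / (ℓ.factorial : ℝ)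
        ≤ (p+2 : ℝ) * (k ^ (p+1) / ((p+1).factorial : ℝ)) := by
      have := Finset.sum_le_card_nsmul _ _ _ hterm
      simpa [Finset.card_range, nsmul_eq_mul] using this
    -- Stirling-type lower bound on (p+1)!
    have hstir : ((p:ℝ)+1) ^ (p+1) ≤ Real.exp 1 ^ (p+1) * ((p+1).factorial : ℝ) := by
      have hpos : (0:ℝ) < ((p+1).factorial : ℝ) := by positivity
      have h1 : ((p:ℝ)+1) ^ (p+1) / ((p+1).factorial : ℝ) ≤ Real.exp ((p:ℝ)+1) := by
        have hmem : p + 1 ∈ Finset.range (p + 2) := by simp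
        have := Finset.single_le_sum (f := fun ℓ => ((p:ℝ)+1) ^ ℓ / (ℓ.factorial : ℝ))
          (fun i _ => by positivity) hmem
        calc ((p:ℝ)+1) ^ (p+1) / ((p+1).factorial : ℝ)
            ≤ ∑ ℓ ∈ Finset.range (p + 2), ((p:ℝ)+1) ^ ℓ / (ℓ.factorial : ℝ) := this
          _ ≤ Real.exp ((p:ℝ)+1) := Real.sum_le_exp_of_nonneg hN.le _
      rw [hexp_pow] at h1
      rw [div_le_iff₀ hpos] at h1
      linarith [h1]
    have hp2 : (p+2 : ℝ) ≤ 2 ^ (p+1) := by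
      have h := Nat.lt_two_pow_self (n := p+1)
      exact_mod_cast Nat.succ_le_of_lt h
    rw [hMk]
    have hfpos : (0:ℝ) < ((p+1).factorial : ℝ) := by positivity
    have key : k ^ (p+1) / ((p+1).factorial : ℝ)
        ≤ Real.exp 1 ^ (p+1) * (k / ((p:ℝ)+1)) ^ (p+1) := by
      rw [div_pow, div_le_iff₀ hfpos]
      have hNpow : (0:ℝ) < ((p:ℝ)+1) ^ (p+1) := by positivity
      rw [mul_comm (Real.exp 1 ^ (p+1)), div_mul_eq_mul_div, div_mul_eq_mul_div,
        le_div_iff₀ hNpow]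
      calc k ^ (p+1) * ((p:ℝ)+1) ^ (p+1)
          ≤ k ^ (p+1) * (Real.exp 1 ^ (p+1) * ((p+1).factorial : ℝ)) :=
            mul_le_mul_of_nonneg_left hstir (by positivity)
        _ = k ^ (p+1) * Real.exp 1 ^ (p+1) * ((p+1).factorial : ℝ) := by ring
    calc ∑ ℓ ∈ Finset.range (p + 2), k ^ ℓ / (ℓ.factorial : ℝ)
        ≤ (p+2 : ℝ) * (k ^ (p+1) / ((p+1).factorial : ℝ)) := hsum
      _ ≤ 2 ^ (p+1) * (Real.exp 1 ^ (p+1) * (k / ((p:ℝ)+1)) ^ (p+1)) := by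
          apply mul_le_mul hp2 key (by positivity) (by positivity)
      _ = (2 * Real.exp 1) ^ (p+1) * (k / ((p:ℝ)+1)) ^ (p+1) := by
          rw [mul_pow]; ring
end
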